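/- For any h with 1 ≤ h ≤ n−2, the h-embedded connectivity of the hypercube satisfies ζ_h(Q_n) ≤ 2^h (n−h). -/

import Mathlib

open SimpleGraph

def cubeGraph (n : ℕ) : SimpleGraph (Fin n → Bool) where
  Adj x y := ∃! i, x i ≠ y i
  symm := ⟨by
    rintro x y ⟨i, hi, hu⟩
    exact ⟨i, hi.symm, fun j hj => hu j hj.symm⟩⟩
  loopless := ⟨by rintro x ⟨i, hi, -⟩; exact hi rfl⟩

def starGraph (n : ℕ) [NeZero n] : SimpleGraph (Equiv.Perm (Fin n)) where
  Adj x y := ∃ i : Fin n, i ≠ 0 ∧ y = x * Equiv.swap 0 i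
  symm := ⟨by
    rintro x y ⟨i, hi, rfl⟩
    exact ⟨i, hi, by rw [mul_assoc, Equiv.swap_mul_self, mul_one]⟩⟩
  loopless := ⟨by
    rintro x ⟨i, hi, h⟩
    exact hi (Equiv.swap_eq_one_iff.mp (left_eq_mul.mp h)).symm⟩

def bubbleGraph (n : ℕ) : SimpleGraph (Equiv.Perm (Fin n)) where
  Adj x y := ∃ (i : Fin n) (hi : (i : ℕ) + 1 < n), y = x * Equiv.swap i ⟨(i : ℕ) + 1, hi⟩
  symm := ⟨by
    rintro x y ⟨i, hi, rfl⟩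
    exact ⟨i, hi, by rw [mul_assoc, Equiv.swap_mul_self, mul_one]⟩⟩
  loopless := ⟨by
    rintro x ⟨i, hi, h⟩
    have h1 := Equiv.swap_eq_one_iff.mp (left_eq_mul.mp h)
    have := congrArg Fin.val h1
    simp at this⟩

def IsEmbVertexCut {V W : Type*} (G : SimpleGraph V) (H : SimpleGraph W) (S : Set V) : Prop :=
  ¬ (G.induce Sᶜ).Connected ∧
    ∀ v ∉ S, ∃ A : Set V, v ∈ A ∧ Disjoint A S ∧ Nonempty (H ≃g G.induce A)

noncomputable def embConn {V W : Type*} (G : SimpleGraph V) (H : SimpleGraph W) : ℕ :=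
  sInf {k | ∃ S : Set V, S.Finite ∧ S.ncard = k ∧ IsEmbVertexCut G H S}

def IsEmbEdgeCut {V W : Type*} (G : SimpleGraph V) (H : SimpleGraph W) (F : Set (Sym2 V)) : Prop :=
  F ⊆ G.edgeSet ∧ ¬ (G.deleteEdges F).Connected ∧
    ∀ v : V, ∃ A : Set V, v ∈ A ∧ Nonempty (H ≃g (G.deleteEdges F).induce A)

noncomputable def embEdgeConn {V W : Type*} (G : SimpleGraph V) (H : SimpleGraph W) : ℕ :=
  sInf {k | ∃ F : Set (Sym2 V), F.Finite ∧ F.ncard = k ∧ IsEmbEdgeCut G H F}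

def IsSuperVertexCut {V : Type*} (G : SimpleGraph V) (h : ℕ) (S : Set V) : Prop :=
  ¬ (G.induce Sᶜ).Connected ∧ ∀ v ∉ S, h ≤ ((G.neighborSet v) \ S).ncard

noncomputable def superConn {V : Type*} (G : SimpleGraph V) (h : ℕ) : ℕ :=
  sInf {k | ∃ S : Set V, S.Finite ∧ S.ncard = k ∧ IsSuperVertexCut G h S}

def IsSuperEdgeCut {V : Type*} (G : SimpleGraph V) (h : ℕ) (F : Set (Sym2 V)) : Prop :=
  F ⊆ G.edgeSet ∧ ¬ (G.deleteEdges F).Connected ∧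
    ∀ v : V, h ≤ ((G.deleteEdges F).neighborSet v).ncard

noncomputable def superEdgeConn {V : Type*} (G : SimpleGraph V) (h : ℕ) : ℕ :=
  sInf {k | ∃ F : Set (Sym2 V), F.Finite ∧ F.ncard = k ∧ IsSuperEdgeCut G h F}

/-!
Write `Q_{h+m} = Q_h □ Q_m` and take `S = Q_h × N(x)` for a vertex `x` of `Q_m`. Every vertex
`(a, b)` outside `S` lies in the copy `Q_h × {b}` of `Q_h`, which misses `S` because `b ∉ N(x)`.
Removing `S` cuts the layer `Q_h × {x}` off from the layer of any `y ∉ {x} ∪ N(x)`, and such a `y`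
exists once `m ≥ 2`. Finally `|S| = 2^h · m`.
-/

open Function

section Cube

variable {n : ℕ}

theorem cubeGraph_adj_iff_hammingDist_eq_one {x y : Fin n → Bool} :
    (cubeGraph n).Adj x y ↔ hammingDist x y = 1 :=
  Fintype.existsUnique_iff_card_one _

theorem hammingDist_append {β : Type*} [DecidableEq β] {h m : ℕ} (a a' : Fin h → β)
    (b b' : Fin m → β) :
    hammingDist (Fin.append a b) (Fin.append a' b') = hammingDist a a' + hammingDist b b' := by
  simp only [hammingDist, Finset.card_filter, Fin.sum_univ_add, Fin.append_left, Fin.append_right]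

def cubeGraphBoxProdIso (h m : ℕ) : (cubeGraph h).boxProd (cubeGraph m) ≃g cubeGraph (h + m) where
  toEquiv := Fin.appendEquiv h m
  map_rel_iff' {p q} := by
    change (cubeGraph _).Adj (Fin.append p.1 p.2) (Fin.append q.1 q.2) ↔ _
    simp only [cubeGraph_adj_iff_hammingDist_eq_one, hammingDist_append, boxProd_adj,
      Nat.add_eq_one_iff, hammingDist_eq_zero]
    tauto

theorem cubeGraph_neighborSet (x : Fin n → Bool) :
    (cubeGraph n).neighborSet x = Set.range fun i => update x i (!x i) := by
  ext y
  simp only [mem_neighborSet, Set.mem_range]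
  constructor
  · rintro ⟨i, hi, hu⟩
    refine ⟨i, funext fun j => ?_⟩
    by_cases hji : j = i
    · subst hji
      rw [update_self]
      exact (Bool.eq_not.mpr hi.symm).symm
    · rw [update_of_ne hji]
      exact not_not.mp fun hj => hji (hu j hj)
  · rintro ⟨i, rfl⟩
    refine ⟨i, by simp, fun j hj => ?_⟩
    by_contra hji
    simp [update_of_ne hji] at hj

theorem ncard_neighborSet_cubeGraph (x : Fin n → Bool) :
    ((cubeGraph n).neighborSet x).ncard = n := by
  rw [cubeGraph_neighborSet, Set.ncard_range_of_injective, Nat.card_fin]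
  intro i j hij
  by_contra hne
  simpa [update_of_ne hne] using congrFun hij i

theorem cubeGraph_exists_ne_not_adj (hn : 2 ≤ n) (x : Fin n → Bool) :
    ∃ y, x ≠ y ∧ ¬ (cubeGraph n).Adj x y := by
  let i : Fin n := ⟨0, by omega⟩
  let j : Fin n := ⟨1, by omega⟩
  have hij : i ≠ j := by simp [i, j, Fin.ext_iff]
  refine ⟨update (update x i (!x i)) j (!x j), fun hxy => ?_, ?_⟩
  · simpa using congrFun hxy j
  · rintro ⟨k, -, hk⟩
    exact hij ((hk i (by simp [update_of_ne hij])).trans (hk j (by simp)).symm)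

end Cube

section EmbVertexCut

variable {V V' W : Type*} {G : SimpleGraph V} {G' : SimpleGraph V'} {H : SimpleGraph W}

theorem SimpleGraph.Reachable.mem_of_forall_adj_mem {u v : V} {s : Set V}
    (hs : ∀ a b, G.Adj a b → a ∈ s → b ∈ s) (huv : G.Reachable u v) (hu : u ∈ s) : v ∈ s := by
  obtain ⟨p⟩ := huv
  induction p with
  | nil => exact hu
  | cons hadj _ ih => exact ih (hs _ _ hadj hu)

theorem IsEmbVertexCut.comap {S : Set V'} (e : G ≃g G') (hS : IsEmbVertexCut G' H S) :
    IsEmbVertexCut G H (e ⁻¹' S) := by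
  obtain ⟨hdisconn, hemb⟩ := hS
  have hbij (A : Set V') : Set.BijOn e (e ⁻¹' A) A := e.bijective.bijOn_preimage
  refine ⟨fun hconn => hdisconn ((e.induce (hbij Sᶜ)).connected_iff.mp hconn), fun v hv => ?_⟩
  obtain ⟨A, hvA, hAS, ⟨φ⟩⟩ := hemb (e v) hv
  exact ⟨e ⁻¹' A, hvA, hAS.preimage e, ⟨(e.induce (hbij A)).symm.comp φ⟩⟩

theorem embConn_le_ncard {S : Set V} (hS : IsEmbVertexCut G H S) (hfin : S.Finite) :
    embConn G H ≤ S.ncard :=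
  Nat.sInf_le ⟨S, hfin, rfl, hS⟩

theorem isEmbVertexCut_boxProd_univ_prod_neighborSet [Nonempty V] {x y : W} (hxy : x ≠ y)
    (hadj : ¬ H.Adj x y) :
    IsEmbVertexCut (G.boxProd H) G (Set.univ ×ˢ H.neighborSet x) := by
  refine ⟨fun hconn => ?_, fun v hv => ?_⟩
  · let a : V := Classical.arbitrary V
    have hay : (a, y) ∈ (Set.univ ×ˢ H.neighborSet x)ᶜ := by simp [hadj]
    let layer : Set ↥((Set.univ : Set V) ×ˢ H.neighborSet x)ᶜ := {p | p.1.2 = x}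
    refine hxy ((hconn.preconnected ⟨(a, x), by simp⟩ ⟨(a, y), hay⟩).mem_of_forall_adj_mem
      (s := layer) ?_ rfl).symm
    rintro ⟨⟨a₁, b₁⟩, _⟩ ⟨⟨a₂, b₂⟩, hS₂⟩ hadj₁₂ (rfl : b₁ = x)
    rcases boxProd_adj.mp hadj₁₂ with ⟨-, hb⟩ | ⟨hb, -⟩
    · exact hb.symm
    · exact absurd ⟨trivial, hb⟩ hS₂
  · refine ⟨Set.range (G.boxProdLeft H v.2), ⟨v.1, rfl⟩, ?_, ⟨(G.boxProdLeft H v.2).isoInduceRange⟩⟩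
    rw [Set.disjoint_left]
    rintro _ ⟨a, rfl⟩ ⟨-, hb⟩
    exact hv ⟨trivial, hb⟩

end EmbVertexCut

theorem stmt1_general (n h : ℕ) (h2 : h + 2 ≤ n) :
    embConn (cubeGraph n) (cubeGraph h) ≤ 2 ^ h * (n - h) := by
  obtain ⟨m, rfl⟩ := Nat.exists_eq_add_of_le (by omega : h ≤ n)
  let x : Fin m → Bool := fun _ => false
  obtain ⟨y, hxy, hadj⟩ := cubeGraph_exists_ne_not_adj (by omega) x
  have hcut := (isEmbVertexCut_boxProd_univ_prod_neighborSet (G := cubeGraph h) hxy hadj).comap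
    (cubeGraphBoxProdIso h m).symm
  calc embConn (cubeGraph (h + m)) (cubeGraph h)
      ≤ ((cubeGraphBoxProdIso h m).symm ⁻¹' (Set.univ ×ˢ (cubeGraph m).neighborSet x)).ncard :=
        embConn_le_ncard hcut (Set.toFinite _)
    _ = (Set.univ ×ˢ (cubeGraph m).neighborSet x).ncard :=
        Set.ncard_preimage_of_injective_subset_range (RelIso.injective _) (by simp)
    _ = 2 ^ h * (h + m - h) := by
        rw [Set.ncard_prod, Set.ncard_univ, ncard_neighborSet_cubeGraph]
        simp

/-- `ζ_h(Q_n) ≤ 2^h (n-h)` for `1 ≤ h ≤ n-2`. -/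
theorem stmt1 (n h : ℕ) (h1 : 1 ≤ h) (h2 : h + 2 ≤ n) :
    embConn (cubeGraph n) (cubeGraph h) ≤ 2 ^ h * (n - h) :=
  stmt1_general n h h2
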